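/- For every integer d ≥ 2, ICor(𝔤_d*) = 𝔷_d^⊥; that is, the common zero set of all Ad*(G_d)-invariant polynomial functions P on 𝔤_d* with P(0) = 0 is exactly {ℓ ∈ 𝔤_d* : ℓ(Z_1) = ⋯ = ℓ(Z_d) = 0}. -/

import Mathlib

/-- The coadjoint action of the Lie algebra: `(coad X f) W = f ⁅W, X⁆`. -/
def coad {L : Type*} [LieRing L] [LieAlgebra ℝ L] (X : L) (f : Module.Dual ℝ L) :
    Module.Dual ℝ L where
  toFun W := f ⁅W, X⁆
  map_add' a b := by simp [add_lie]
  map_smul' c a := by simp [smul_lie]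

/-- The set `{ad*_X ℓ : X ∈ 𝔤, ℓ ∈ 𝔤*}` of all coadjoint tangent vectors. -/
def adStar (L : Type*) [LieRing L] [LieAlgebra ℝ L] : Set (Module.Dual ℝ L) :=
  {g | ∃ (X : L) (ℓ : Module.Dual ℝ L), g = coad X ℓ}

/-- Coordinates of a linear functional with respect to the dual basis of `B`;
this identifies `𝔤*` with `ι → ℝ`, carrying the canonical topology. -/
noncomputable def coords {ι : Type*} {L : Type*} [LieRing L] [LieAlgebra ℝ L]
    (B : Module.Basis ι ℝ L) (f : Module.Dual ℝ L) : ι → ℝ := fun a => f (B a)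

/-- The cortex `Cor(𝔤*)`: the closure (in the canonical topology of the
finite-dimensional space `𝔤*`, transported to coordinates via the dual basis)
of the set `{ad*_X ℓ : X ∈ 𝔤, ℓ ∈ 𝔤*}`. -/
def corSet {ι : Type*} {L : Type*} [LieRing L] [LieAlgebra ℝ L] (B : Module.Basis ι ℝ L) :
    Set (Module.Dual ℝ L) :=
  {f | coords B f ∈ closure (coords B '' adStar L)}

/-- Index type for the basis of `𝔤_d`: first component indexes `Z_1,…,Z_d`, the second
the odd `Y`'s `Y_1, Y_3, …, Y_{2d-1}`, the third the even `Y`'s `Y_2, Y_4, …, Y_{2d}`,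
and the fourth `X_1,…,X_d`. -/
abbrev Idx (d : ℕ) : Type := Fin d ⊕ (Fin d ⊕ (Fin d ⊕ Fin d))

/-- Index of `Z_{i+1}`. -/
def zI {d : ℕ} (i : Fin d) : Idx d := Sum.inl i
/-- Index of `Y_{2i+1}` (odd-indexed `Y`). -/
def yoI {d : ℕ} (i : Fin d) : Idx d := Sum.inr (Sum.inl i)
/-- Index of `Y_{2i+2}` (even-indexed `Y`). -/
def yeI {d : ℕ} (i : Fin d) : Idx d := Sum.inr (Sum.inr (Sum.inl i))
/-- Index of `X_{i+1}`. -/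
def xI {d : ℕ} (i : Fin d) : Idx d := Sum.inr (Sum.inr (Sum.inr i))

/-- Value of `⁅X_{i+1}, Y_{2i+2}⁆`: `Z_{i+2}` if `i + 1 < d`, and `Z_2 + ⋯ + Z_d`
if `i + 1 = d`. -/
def gdW {d : ℕ} (hd : 2 ≤ d) {V : Type*} [AddCommGroup V] (B : Idx d → V) (i : Fin d) : V :=
  if h : (i : ℕ) < d - 1 then B (zI ⟨(i : ℕ) + 1, by omega⟩)
  else ∑ m ∈ Finset.univ.filter (fun m : Fin d => 0 < (m : ℕ)), B (zI m)

/-- The bracket `⁅B a, B b⁆` of two basis vectors of `𝔤_d`, given by the structure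
constants: `⁅X_i, Y_{2i-1}⁆ = Z_1` for `i = 1,…,d`, `⁅X_k, Y_{2k}⁆ = Z_{k+1}` for
`k = 1,…,d-1`, `⁅X_d, Y_{2d}⁆ = Z_2 + ⋯ + Z_d`, all other brackets of basis
vectors being zero (up to antisymmetry). -/
def gdBr {d : ℕ} (hd : 2 ≤ d) {V : Type*} [AddCommGroup V] (B : Idx d → V) :
    Idx d → Idx d → V
  | Sum.inr (Sum.inr (Sum.inr i)), Sum.inr (Sum.inl j) =>
      if i = j then B (zI ⟨0, by omega⟩) else 0
  | Sum.inr (Sum.inl j), Sum.inr (Sum.inr (Sum.inr i)) =>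
      if i = j then -(B (zI ⟨0, by omega⟩)) else 0
  | Sum.inr (Sum.inr (Sum.inr i)), Sum.inr (Sum.inr (Sum.inl j)) =>
      if i = j then gdW hd B i else 0
  | Sum.inr (Sum.inr (Sum.inl j)), Sum.inr (Sum.inr (Sum.inr i)) =>
      if i = j then -(gdW hd B i) else 0
  | _, _ => 0

/-- The homogeneous polynomial `Q_d` of degree `d`, evaluated at the odd coordinates
`ηo` (`ηo i = η_{2i+1}`) and the even coordinates `ηe` (`ηe i = η_{2i+2}`):
`Q_d = η_{2d-1}·Σ_{i=1}^{d-1}(η_{2i}·∏_{j=1, j≠i}^{d-1} η_{2j-1})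
      − η_{2d}·∏_{j=1}^{d-1} η_{2j-1}`. -/
def Qd (d : ℕ) (hd : 2 ≤ d) (ηo ηe : Fin d → ℝ) : ℝ :=
  ηo ⟨d - 1, by omega⟩ *
      (∑ i ∈ Finset.univ.filter (fun i : Fin d => (i : ℕ) < d - 1),
        ηe i * ∏ j ∈ Finset.univ.filter (fun j : Fin d => (j : ℕ) < d - 1 ∧ j ≠ i), ηo j)
    - ηe ⟨d - 1, by omega⟩ *
        ∏ j ∈ Finset.univ.filter (fun j : Fin d => (j : ℕ) < d - 1), ηo j

/-! Let `φ` be a continuous `Ad*`-invariant function on `𝔤*` and let `ℓ` vanish on `[𝔤, 𝔤]`, so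
that `ad*_X ℓ = 0`. For `t ≠ 0`, invariance under `X / t` at the point `t ζ + ℓ` gives
`φ (t ζ + ℓ + ad*_X ζ) = φ (t ζ + ℓ)`, and letting `t → 0` yields `φ (ℓ + ad*_X ζ) = φ ℓ`.
In a two-step nilpotent Lie algebra every `ad*_X ζ` again vanishes on `[𝔤, 𝔤]`, so this
iterates: `φ` is constant on the span of `{ad*_X ζ}`. For `𝔤_d` that span contains every
dual-basis coordinate other than those of the `Z_i`, hence all of `𝔷_d^⊥`. Conversely, the
coordinates `ℓ ↦ ℓ (Z_i)` are themselves invariant polynomials, since the `Z_i` are central. -/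

section Coadjoint

variable {L : Type*} [LieRing L] [LieAlgebra ℝ L]

@[simp]
lemma coad_apply (X : L) (f : Module.Dual ℝ L) (W : L) : coad X f W = f ⁅W, X⁆ := rfl

lemma coad_smul_left (t : ℝ) (X : L) (f : Module.Dual ℝ L) :
    coad (t • X) f = t • coad X f := by
  ext W
  simp [lie_smul]

lemma coad_smul_right (t : ℝ) (X : L) (f : Module.Dual ℝ L) :
    coad X (t • f) = t • coad X f := rfl

lemma coad_add_right (X : L) (f g : Module.Dual ℝ L) :
    coad X (f + g) = coad X f + coad X g := rfl

lemma coad_eq_zero_of_apply_lie_eq_zero {ℓ : Module.Dual ℝ L} (hℓ : ∀ U V : L, ℓ ⁅U, V⁆ = 0)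
    (X : L) : coad X ℓ = 0 := by
  ext W
  exact hℓ W X

lemma coad_mem_span_adStar (X : L) (ζ : Module.Dual ℝ L) :
    coad X ζ ∈ Submodule.span ℝ (adStar L) :=
  Submodule.subset_span ⟨X, ζ, rfl⟩

lemma apply_lie_eq_zero_of_mem_span_adStar (h2 : ∀ U V W : L, ⁅⁅U, V⁆, W⁆ = 0)
    {v : Module.Dual ℝ L} (hv : v ∈ Submodule.span ℝ (adStar L)) (U V : L) : v ⁅U, V⁆ = 0 := by
  induction hv using Submodule.span_induction with
  | mem _ h =>
    obtain ⟨X, ζ, rfl⟩ := h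
    simp [h2]
  | zero => rfl
  | add _ _ _ _ hx hy => simp [hx, hy]
  | smul _ _ _ hx => simp [hx]

variable {φ : Module.Dual ℝ L → ℝ}
  (hinv : ∀ (X : L) (m : Module.Dual ℝ L), φ (m + coad X m) = φ m)
  (hcont : ∀ ζ μ : Module.Dual ℝ L, Continuous fun t : ℝ => φ (t • ζ + μ))
include hinv hcont

theorem apply_add_coad_eq {ℓ : Module.Dual ℝ L} (hℓ : ∀ U V : L, ℓ ⁅U, V⁆ = 0) (X : L)
    (ζ : Module.Dual ℝ L) : φ (ℓ + coad X ζ) = φ ℓ := by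
  have hline : ∀ t : ℝ, t ≠ 0 → φ (t • ζ + (ℓ + coad X ζ)) = φ (t • ζ + ℓ) := by
    intro t ht
    have hmove : t • ζ + (ℓ + coad X ζ) = t • ζ + ℓ + coad (t⁻¹ • X) (t • ζ + ℓ) := by
      rw [coad_smul_left, coad_add_right, coad_smul_right,
        coad_eq_zero_of_apply_lie_eq_zero hℓ, add_zero, smul_smul, inv_mul_cancel₀ ht, one_smul,
        add_assoc]
    rw [hmove, hinv]
  have := Continuous.ext_on (dense_compl_singleton (0 : ℝ)) (hcont ζ (ℓ + coad X ζ))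
    (hcont ζ ℓ) hline
  simpa using congrFun this 0

theorem apply_add_eq_of_mem_span_adStar (h2 : ∀ U V W : L, ⁅⁅U, V⁆, W⁆ = 0)
    {v : Module.Dual ℝ L} (hv : v ∈ Submodule.span ℝ (adStar L)) {ℓ : Module.Dual ℝ L}
    (hℓ : ∀ U V : L, ℓ ⁅U, V⁆ = 0) : φ (ℓ + v) = φ ℓ := by
  -- Quantifying over the scalar `c` makes the `smul` step of the induction trivial.
  suffices h : ∀ (c : ℝ) (ℓ : Module.Dual ℝ L), (∀ U V : L, ℓ ⁅U, V⁆ = 0) → φ (ℓ + c • v) = φ ℓ by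
    simpa using h 1 ℓ hℓ
  induction hv using Submodule.span_induction with
  | mem _ h =>
    obtain ⟨X, ζ, rfl⟩ := h
    intro c ℓ hℓ
    rw [← coad_smul_left]
    exact apply_add_coad_eq hinv hcont hℓ _ ζ
  | zero => simp
  | add x _ hx _ ihx ihy =>
    intro c ℓ hℓ
    have hℓx : ∀ U V : L, (ℓ + c • x) ⁅U, V⁆ = 0 := by
      simp [hℓ, apply_lie_eq_zero_of_mem_span_adStar h2 hx]
    rw [smul_add, ← add_assoc, ihy c _ hℓx, ihx c ℓ hℓ]
  | smul _ _ _ ih =>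
    intro c ℓ hℓ
    rw [smul_smul]
    exact ih _ ℓ hℓ

theorem apply_eq_apply_zero_of_mem_span_adStar (h2 : ∀ U V W : L, ⁅⁅U, V⁆, W⁆ = 0)
    {v : Module.Dual ℝ L} (hv : v ∈ Submodule.span ℝ (adStar L)) : φ v = φ 0 := by
  simpa using apply_add_eq_of_mem_span_adStar hinv hcont h2 hv (ℓ := 0) fun _ _ => rfl

end Coadjoint

lemma continuous_eval_coords_add_smul {ι : Type*} {L : Type*} [LieRing L] [LieAlgebra ℝ L]
    (B : Module.Basis ι ℝ L) (P : MvPolynomial ι ℝ) (ζ μ : Module.Dual ℝ L) :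
    Continuous fun t : ℝ => MvPolynomial.eval (coords B (t • ζ + μ)) P := by
  refine (MvPolynomial.continuous_eval P).comp (continuous_pi fun a => ?_)
  simp only [coords, LinearMap.add_apply, LinearMap.smul_apply, smul_eq_mul]
  fun_prop

lemma Module.Basis.lie_mem_of_forall_lie_mem {R ι L : Type*} [CommRing R] [Fintype ι]
    [LieRing L] [LieAlgebra R L] (B : Module.Basis ι R L) (S : Submodule R L)
    (h : ∀ a b, ⁅B a, B b⁆ ∈ S) (U V : L) : ⁅U, V⁆ ∈ S := by
  rw [← B.sum_repr U, ← B.sum_repr V, sum_lie]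
  refine S.sum_mem fun a _ => ?_
  rw [lie_sum]
  refine S.sum_mem fun b _ => ?_
  rw [smul_lie, lie_smul]
  exact S.smul_mem _ (S.smul_mem _ (h a b))

section Gd

variable {d : ℕ} (hd : 2 ≤ d)

lemma gdBr_mem {V : Type*} [AddCommGroup V] (S : AddSubgroup V) (B : Idx d → V)
    (hS : ∀ i, B (zI i) ∈ S) (a b : Idx d) : gdBr hd B a b ∈ S := by
  have hW : ∀ j, gdW hd B j ∈ S := by
    intro j
    unfold gdW
    split_ifs
    · exact hS _
    · exact S.sum_mem fun m _ => hS m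
  rcases a with i | i | i | i <;> rcases b with j | j | j | j <;> simp only [gdBr] <;>
    (try split_ifs) <;>
    first
    | exact S.zero_mem
    | exact hS _
    | exact S.neg_mem (hS _)
    | exact hW _
    | exact S.neg_mem (hW _)

variable {L : Type*} [LieRing L] [LieAlgebra ℝ L] (B : Module.Basis (Idx d) ℝ L)
  (hbr : ∀ a b : Idx d, ⁅B a, B b⁆ = gdBr hd (fun c => B c) a b)

lemma gd_exists_dual_gdW (j : Fin d) : ∃ ζ : Module.Dual ℝ L,
    ζ (B (zI ⟨0, by omega⟩)) = 0 ∧ ζ (gdW hd (fun c => B c) j) = 1 := by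
  unfold gdW
  split_ifs with hj
  · exact ⟨B.coord (zI ⟨j + 1, by omega⟩), by simp [zI], by simp⟩
  · refine ⟨B.coord (zI ⟨1, by omega⟩), by simp [zI], ?_⟩
    simp [zI, Finsupp.single_apply, Finset.sum_ite_eq']

include hbr

lemma gd_lie_basis_zI (i : Fin d) (Y : L) : ⁅Y, B (zI i)⁆ = 0 := by
  rw [← B.sum_repr Y, sum_lie]
  refine Finset.sum_eq_zero fun c _ => ?_
  rw [smul_lie, hbr]
  rcases c with _ | _ | _ | _ <;> exact smul_zero _

lemma gd_basis_zI_lie (i : Fin d) (Y : L) : ⁅B (zI i), Y⁆ = 0 := by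
  rw [← lie_skew, gd_lie_basis_zI hd B hbr, neg_zero]

lemma gd_lie_lie_eq_zero (U V W : L) : ⁅⁅U, V⁆, W⁆ = 0 := by
  have hcenter : ⁅U, V⁆ ∈ LieAlgebra.center ℝ L := by
    refine B.lie_mem_of_forall_lie_mem (LieAlgebra.center ℝ L).toSubmodule (fun a b => ?_) U V
    rw [hbr]
    exact gdBr_mem hd (LieAlgebra.center ℝ L).toSubmodule.toAddSubgroup _
      (fun i => (LieModule.mem_maxTrivSubmodule ℝ L L _).2 (gd_lie_basis_zI hd B hbr i)) a b
  rw [← lie_skew, (LieModule.mem_maxTrivSubmodule ℝ L L _).1 hcenter W, neg_zero]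

lemma gd_coad_basis_xI (j : Fin d) (ζ : Module.Dual ℝ L) :
    coad (B (xI j)) ζ = -(ζ (B (zI ⟨0, by omega⟩)) • B.coord (yoI j) +
      ζ (gdW hd (fun c => B c) j) • B.coord (yeI j)) := by
  refine B.ext fun c => ?_
  rcases c with k | k | k | k <;> by_cases hjk : j = k <;>
    simp [hbr, gdBr, zI, yoI, yeI, xI, hjk]

lemma gd_coad_basis_yoI (j : Fin d) (ζ : Module.Dual ℝ L) :
    coad (B (yoI j)) ζ = ζ (B (zI ⟨0, by omega⟩)) • B.coord (xI j) := by
  refine B.ext fun c => ?_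
  rcases c with k | k | k | k <;> by_cases hjk : j = k <;>
    simp [hbr, gdBr, zI, yoI, xI, hjk, eq_comm (a := k)]

lemma gd_coord_yeI_mem_span_adStar (j : Fin d) :
    B.coord (yeI j) ∈ Submodule.span ℝ (adStar L) := by
  obtain ⟨ζ, hζ0, hζW⟩ := gd_exists_dual_gdW hd B j
  have h := coad_mem_span_adStar (B (xI j)) ζ
  rw [gd_coad_basis_xI hd B hbr, hζ0, hζW, zero_smul, one_smul, zero_add] at h
  simpa using h

lemma gd_coord_yoI_mem_span_adStar (j : Fin d) :
    B.coord (yoI j) ∈ Submodule.span ℝ (adStar L) := by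
  have h := coad_mem_span_adStar (B (xI j)) (B.coord (zI ⟨0, by omega⟩))
  rw [gd_coad_basis_xI hd B hbr, B.coord_apply, B.repr_self, Finsupp.single_eq_same, one_smul,
    neg_mem_iff] at h
  simpa using Submodule.sub_mem _ h (Submodule.smul_mem _
    (B.coord (zI ⟨0, by omega⟩) (gdW hd (fun c => B c) j))
    (gd_coord_yeI_mem_span_adStar hd B hbr j))

lemma gd_coord_xI_mem_span_adStar (j : Fin d) :
    B.coord (xI j) ∈ Submodule.span ℝ (adStar L) := by
  have h := coad_mem_span_adStar (B (yoI j)) (B.coord (zI ⟨0, by omega⟩))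
  rwa [gd_coad_basis_yoI hd B hbr, B.coord_apply, B.repr_self, Finsupp.single_eq_same,
    one_smul] at h

lemma gd_mem_span_adStar {ℓ : Module.Dual ℝ L} (hℓ : ∀ i, ℓ (B (zI i)) = 0) :
    ℓ ∈ Submodule.span ℝ (adStar L) := by
  rw [← B.sum_dual_apply_smul_coord ℓ]
  refine Submodule.sum_mem _ fun c _ => ?_
  rcases c with i | j | j | j
  · rw [show ℓ (B (Sum.inl i)) = 0 from hℓ i, zero_smul]
    exact Submodule.zero_mem _
  · exact Submodule.smul_mem _ _ (gd_coord_yoI_mem_span_adStar hd B hbr j)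
  · exact Submodule.smul_mem _ _ (gd_coord_yeI_mem_span_adStar hd B hbr j)
  · exact Submodule.smul_mem _ _ (gd_coord_xI_mem_span_adStar hd B hbr j)

end Gd

/-- For every `d ≥ 2`, `ICor(𝔤_d*) = 𝔷_d^⊥`: the set of `ℓ ∈ 𝔤_d*` with
`P(ℓ) = P(0)` for every `Ad*(G_d)`-invariant polynomial `P` is exactly
`{ℓ : ℓ(Z_1) = ⋯ = ℓ(Z_d) = 0}`. -/
theorem icor_gd (d : ℕ) (hd : 2 ≤ d) (L : Type) [LieRing L] [LieAlgebra ℝ L]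
    (B : Module.Basis (Idx d) ℝ L)
    (hbr : ∀ a b : Idx d, ⁅B a, B b⁆ = gdBr hd (fun c => B c) a b) :
    {ℓ : Module.Dual ℝ L | ∀ P : MvPolynomial (Idx d) ℝ,
        (∀ (X : L) (m : Module.Dual ℝ L),
          MvPolynomial.eval (coords B (m + coad X m)) P = MvPolynomial.eval (coords B m) P) →
        MvPolynomial.eval (coords B ℓ) P = MvPolynomial.eval (fun _ : Idx d => (0 : ℝ)) P}
      = {ℓ : Module.Dual ℝ L | ∀ i : Fin d, ℓ (B (zI i)) = 0} := by
  ext ℓ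
  constructor
  · intro hℓ i
    have hinv : ∀ (X : L) (m : Module.Dual ℝ L),
        MvPolynomial.eval (coords B (m + coad X m)) (MvPolynomial.X (zI i)) =
          MvPolynomial.eval (coords B m) (MvPolynomial.X (zI i)) := by
      simp [coords, gd_basis_zI_lie hd B hbr]
    simpa [coords] using hℓ _ hinv
  · intro hℓ P hP
    exact apply_eq_apply_zero_of_mem_span_adStar (φ := fun m => MvPolynomial.eval (coords B m) P)
      hP (continuous_eval_coords_add_smul B P) (gd_lie_lie_eq_zero hd B hbr)
      (gd_mem_span_adStar hd B hbr hℓ)
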